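/- arXiv:math-ph/0210031 — 4 statements merged into one kernel-verified Lean document; each statement's English description precedes it below -/
import Mathlib

section
/- The map π assigning to each finite-range kernel k the operator family (K_ω)_{ω∈Ω} is a faithful *-representation of the *-algebra K_fin(Ω) into the product Π_{ω∈Ω} B(ℓ²(ω)): π(a·b)_ω = π(a)_ω π(b)_ω, π(k*)_ω = (π(k)_ω)*, and π(k) = 0 implies k = 0. -/
noncomputable section
open Metric Set

/-- An `(r,R)`-Delone set in `ℝ^d`. -/
def IsDeloneSet {d : ℕ} (r R : ℝ) (ω : Set (EuclideanSpace ℝ (Fin d))) : Prop :=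
  (∀ x ∈ ω, ∀ y ∈ ω, x ≠ y → 2 * r ≤ dist x y) ∧
    ∀ x : EuclideanSpace ℝ (Fin d), ∃ p ∈ ω, dist x p ≤ R

/-- The translate `ω + t = {y + t : y ∈ ω}`. -/
def deloneAdd {d : ℕ} (ω : Set (EuclideanSpace ℝ (Fin d))) (t : EuclideanSpace ℝ (Fin d)) :
    Set (EuclideanSpace ℝ (Fin d)) := (fun y => y + t) '' ω

/-- The convolution product `(a·b)(p,ω,q) = Σ_{x∈ω} a(p,ω,x) b(x,ω,q)`. -/
def kernelConv {d : ℕ} (a b : EuclideanSpace ℝ (Fin d) → Set (EuclideanSpace ℝ (Fin d)) →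
      EuclideanSpace ℝ (Fin d) → ℂ)
    (p : EuclideanSpace ℝ (Fin d)) (ω : Set (EuclideanSpace ℝ (Fin d)))
    (q : EuclideanSpace ℝ (Fin d)) : ℂ :=
  ∑' x : ω, a p ω x * b x ω q

/-- The involution `k*(p,ω,q) = conj k(q,ω,p)`. -/
def kernelStar {d : ℕ} (k : EuclideanSpace ℝ (Fin d) → Set (EuclideanSpace ℝ (Fin d)) →
      EuclideanSpace ℝ (Fin d) → ℂ)
    (p : EuclideanSpace ℝ (Fin d)) (ω : Set (EuclideanSpace ℝ (Fin d)))
    (q : EuclideanSpace ℝ (Fin d)) : ℂ :=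
  (starRingEnd ℂ) (k q ω p)

/-- A `2r`-separated set meets any ball in a finite set. -/
lemma delone_ball_finite {d : ℕ} {r : ℝ} (hr : 0 < r)
    {ω : Set (EuclideanSpace ℝ (Fin d))}
    (hsep : ∀ x ∈ ω, ∀ y ∈ ω, x ≠ y → 2 * r ≤ dist x y)
    (p : EuclideanSpace ℝ (Fin d)) (ρ : ℝ) :
    {y ∈ ω | dist p y < ρ}.Finite := by
  by_contra h
  have hS : Set.Infinite {y ∈ ω | dist p y < ρ} := h
  obtain ⟨x, -, hx⟩ := hS.exists_accPt_of_subset_isCompact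
    (isCompact_closedBall p ρ)
    (fun y hy => mem_closedBall'.2 hy.2.le)
  rw [accPt_iff_nhds] at hx
  obtain ⟨y, ⟨hyU, hyS⟩, hyx⟩ := hx (ball x r) (ball_mem_nhds _ hr)
  have hdy : 0 < dist y x := dist_pos.2 hyx
  obtain ⟨z, ⟨hzU, hzS⟩, hzx⟩ := hx (ball x (dist y x)) (ball_mem_nhds _ hdy)
  have hzy : z ≠ y := by
    intro hzy; rw [hzy] at hzU; exact lt_irrefl _ (mem_ball.1 hzU)
  have h2r : 2 * r ≤ dist z y := hsep z hzS.1 y hyS.1 hzy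
  have : dist z y < 2 * r := by
    calc dist z y ≤ dist z x + dist x y := dist_triangle z x y
    _ < dist y x + r := by
        have h1 := mem_ball.1 hzU
        have h2 := mem_ball.1 hyU
        rw [dist_comm x y]; linarith
    _ < 2 * r := by have := mem_ball.1 hyU; linarith
  linarith

/-- `π` is a faithful *-representation of the kernel algebra `K_fin(Ω)` in
`Π_ω B(ℓ²(ω))`: it is multiplicative on convolution products, compatible with the
involution (adjoint), and injective. -/
theorem kernel_representation_faithful_star (d : ℕ) (r R Ra Rb : ℝ)
    (hr : 0 < r) (hR : 0 < R) (hRa : 0 < Ra) (hRb : 0 < Rb)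
    (Ω : Set (Set (EuclideanSpace ℝ (Fin d))))
    (hdel : ∀ ω ∈ Ω, IsDeloneSet r R ω)
    (hΩ : ∀ ω ∈ Ω, ∀ t, deloneAdd ω t ∈ Ω)
    (a b : EuclideanSpace ℝ (Fin d) → Set (EuclideanSpace ℝ (Fin d)) →
      EuclideanSpace ℝ (Fin d) → ℂ)
    (haB : ∃ C, ∀ p ω q, ω ∈ Ω → ‖a p ω q‖ ≤ C)
    (hbB : ∃ C, ∀ p ω q, ω ∈ Ω → ‖b p ω q‖ ≤ C)
    (haR : ∀ p ω q, Ra ≤ dist p q → a p ω q = 0)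
    (hbR : ∀ p ω q, Rb ≤ dist p q → b p ω q = 0)
    (haI : ∀ p ω q t, ω ∈ Ω → a (p + t) (deloneAdd ω t) (q + t) = a p ω q)
    (hbI : ∀ p ω q t, ω ∈ Ω → b (p + t) (deloneAdd ω t) (q + t) = b p ω q) :
    -- π(a·b)_ω = π(a)_ω π(b)_ω
    (∀ ω, ω ∈ Ω → ∀ ξ : ω →₀ ℂ, ∀ p : ω,
        ∑ x ∈ ξ.support, kernelConv a b p ω x * ξ x
          = ∑' x : ω, a p ω x * (∑ q ∈ ξ.support, b x ω q * ξ q)) ∧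
    -- π(a*)_ω = (π(a)_ω)*  (adjoint relation ⟨π(a)ξ, η⟩ = ⟨ξ, π(a*)η⟩)
    (∀ ω, ω ∈ Ω → ∀ ξ η : ω →₀ ℂ,
        ∑' p : ω, (starRingEnd ℂ) (η p) * (∑ q ∈ ξ.support, a p ω q * ξ q)
          = ∑' q : ω, (starRingEnd ℂ) (∑ p ∈ η.support, kernelStar a q ω p * η p) * ξ q) ∧
    -- faithfulness: π(a) = 0 implies a = 0 on X × X
    ((∀ ω, ω ∈ Ω → ∀ ξ : ω →₀ ℂ, ∀ p : ω,
        ∑ q ∈ ξ.support, a p ω q * ξ q = 0) →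
      ∀ ω ∈ Ω, ∀ p ∈ ω, ∀ q ∈ ω, a p ω q = 0) := by
  refine ⟨?_, ?_, ?_⟩
  · -- multiplicativity
    intro ω hω ξ p
    have hsep := (hdel ω hω).1
    have hfin : ({y : ↥ω | dist (p : EuclideanSpace ℝ (Fin d))
        (y : EuclideanSpace ℝ (Fin d)) < Ra}).Finite := by
      have h1 := delone_ball_finite hr hsep (p : EuclideanSpace ℝ (Fin d)) Ra
      have h2 : (Subtype.val ⁻¹'
          {y ∈ ω | dist (p : EuclideanSpace ℝ (Fin d)) y < Ra} : Set ↥ω).Finite :=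
        h1.preimage Subtype.val_injective.injOn
      exact h2.subset fun y hy => ⟨y.2, hy⟩
    have hsum : ∀ x ∈ ξ.support,
        Summable (fun y : ↥ω => a ↑p ω ↑y * (b ↑y ω ↑x * ξ x)) := by
      intro x _
      refine summable_of_finite_support (hfin.subset ?_)
      intro y hy
      by_contra hlt
      rw [Set.mem_setOf_eq, not_lt] at hlt
      exact hy (by simp only [haR ↑p ω ↑y hlt, zero_mul])
    calc ∑ x ∈ ξ.support, kernelConv a b ↑p ω ↑x * ξ x
        = ∑ x ∈ ξ.support, ∑' y : ω, a ↑p ω ↑y * (b ↑y ω ↑x * ξ x) := by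
          refine Finset.sum_congr rfl fun x _ => ?_
          rw [kernelConv, ← tsum_mul_right]
          exact tsum_congr fun y => mul_assoc _ _ _
      _ = ∑' y : ω, ∑ x ∈ ξ.support, a ↑p ω ↑y * (b ↑y ω ↑x * ξ x) :=
          (Summable.tsum_finsetSum hsum).symm
      _ = ∑' y : ω, a ↑p ω ↑y * ∑ x ∈ ξ.support, b ↑y ω ↑x * ξ x :=
          tsum_congr fun y => (Finset.mul_sum _ _ _).symm
  · -- adjoint relation
    intro ω hω ξ η
    have h1 : ∑' p : ω, (starRingEnd ℂ) (η p) * (∑ q ∈ ξ.support, a ↑p ω ↑q * ξ q)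
        = ∑ p ∈ η.support, (starRingEnd ℂ) (η p) * (∑ q ∈ ξ.support, a ↑p ω ↑q * ξ q) :=
      tsum_eq_sum fun p hp => by
        rw [Finsupp.notMem_support_iff.1 hp, map_zero, zero_mul]
    have h2 : ∑' q : ω, (starRingEnd ℂ) (∑ p ∈ η.support, kernelStar a ↑q ω ↑p * η p) * ξ q
        = ∑ q ∈ ξ.support,
            (starRingEnd ℂ) (∑ p ∈ η.support, kernelStar a ↑q ω ↑p * η p) * ξ q :=
      tsum_eq_sum fun q hq => by
        rw [Finsupp.notMem_support_iff.1 hq, mul_zero]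
    rw [h1, h2]
    calc ∑ p ∈ η.support, (starRingEnd ℂ) (η p) * ∑ q ∈ ξ.support, a ↑p ω ↑q * ξ q
        = ∑ p ∈ η.support, ∑ q ∈ ξ.support,
            (starRingEnd ℂ) (η p) * (a ↑p ω ↑q * ξ q) :=
          Finset.sum_congr rfl fun p _ => Finset.mul_sum _ _ _
      _ = ∑ q ∈ ξ.support, ∑ p ∈ η.support,
            (starRingEnd ℂ) (η p) * (a ↑p ω ↑q * ξ q) := Finset.sum_comm
      _ = ∑ q ∈ ξ.support,
            (starRingEnd ℂ) (∑ p ∈ η.support, kernelStar a ↑q ω ↑p * η p) * ξ q := by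
          refine Finset.sum_congr rfl fun q _ => ?_
          rw [map_sum, Finset.sum_mul]
          refine Finset.sum_congr rfl fun p _ => ?_
          simp only [kernelStar, map_mul, Complex.conj_conj]
          ring
  · -- faithfulness
    intro H ω hω p hp q hq
    have h := H ω hω (Finsupp.single ⟨q, hq⟩ 1) ⟨p, hp⟩
    rwa [Finsupp.support_single_ne_zero _ one_ne_zero, Finset.sum_singleton,
      Finsupp.single_eq_same, mul_one] at h
end
end

section
/- Let (Ω,T) be a uniquely ergodic minimal (r,R)-Delone dynamical system. If A is an element of the C*-algebra generated by finite-range operators such that π_ω(A) = 0 for some ω ∈ Ω, then π_ω(A) = 0 for all ω ∈ Ω; equivalently, if the spectrum σ(A_ω) is independent of ω for all selfadjoint A (which holds under minimality), then each representation π_ω is faithful. -/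
/-! By the C*-identity, `‖b‖² = ‖b⋆b‖` is the spectral radius of the selfadjoint element `b⋆b`.
Hence if all selfadjoint elements have the same spectrum under `π_ω` and `π_ω'`, the two
representations are isometric, in particular have the same kernel; combined with joint
faithfulness, this kernel is trivial. -/

section CStarAlgebra

variable {B C : Type*} [CStarAlgebra B] [CStarAlgebra C]

theorem nnnorm_eq_of_spectrum_star_mul_self_eq {b : B} {c : C}
    (h : spectrum ℂ (star b * b) = spectrum ℂ (star c * c)) : ‖b‖₊ = ‖c‖₊ := by
  have hsq : ‖b‖₊ * ‖b‖₊ = ‖c‖₊ * ‖c‖₊ := by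
    rw [← CStarRing.nnnorm_star_mul_self, ← CStarRing.nnnorm_star_mul_self, ← ENNReal.coe_inj,
      ← (IsSelfAdjoint.star_mul_self b).spectralRadius_eq_nnnorm,
      ← (IsSelfAdjoint.star_mul_self c).spectralRadius_eq_nnnorm, spectralRadius, spectralRadius, h]
  exact mul_self_inj zero_le zero_le |>.mp hsq

theorem StarAlgHom.nnnorm_map_eq_of_spectrum_eq {𝒜 : Type*} [Ring 𝒜] [StarRing 𝒜] [Algebra ℂ 𝒜]
    (φ : 𝒜 →⋆ₐ[ℂ] B) (ψ : 𝒜 →⋆ₐ[ℂ] C)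
    (h : ∀ a : 𝒜, IsSelfAdjoint a → spectrum ℂ (φ a) = spectrum ℂ (ψ a)) (a : 𝒜) :
    ‖φ a‖₊ = ‖ψ a‖₊ :=
  nnnorm_eq_of_spectrum_star_mul_self_eq <| by
    simpa only [map_mul, map_star] using h _ (IsSelfAdjoint.star_mul_self a)

end CStarAlgebra

theorem constant_spectra_implies_faithful_general
    {𝒜 : Type*} [NormedRing 𝒜] [StarRing 𝒜] [NormedAlgebra ℂ 𝒜]
    {Ω : Type*} (B : Ω → Type*)
    [∀ ω, NormedRing (B ω)] [∀ ω, StarRing (B ω)] [∀ ω, CStarRing (B ω)]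
    [∀ ω, NormedAlgebra ℂ (B ω)] [∀ ω, CompleteSpace (B ω)] [∀ ω, StarModule ℂ (B ω)]
    (π : ∀ ω, 𝒜 →⋆ₐ[ℂ] B ω)
    (hspec : ∀ A : 𝒜, IsSelfAdjoint A → ∀ ω ω' : Ω,
      spectrum ℂ ((π ω) A) = spectrum ℂ ((π ω') A))
    (hjoint : ∀ A : 𝒜, (∀ ω, (π ω) A = 0) → A = 0) :
    (∀ A : 𝒜, ∀ ω : Ω, (π ω) A = 0 → ∀ ω' : Ω, (π ω') A = 0) ∧
    (∀ ω : Ω, Function.Injective (π ω)) := by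
  let _ : ∀ ω, CStarAlgebra (B ω) := fun ω => { }
  have kernel_eq (A : 𝒜) (ω : Ω) (hA : π ω A = 0) (ω' : Ω) : π ω' A = 0 := by
    rw [← nnnorm_eq_zero, ← (π ω).nnnorm_map_eq_of_spectrum_eq (π ω') (hspec · · ω ω') A, hA,
      nnnorm_zero]
  refine ⟨kernel_eq, fun ω => (injective_iff_map_eq_zero (π ω)).mpr fun A hA => ?_⟩
  exact hjoint A (kernel_eq A ω hA)

/-- For the C*-algebra `𝒜` of a uniquely ergodic minimal Delone dynamical system with
its family of evaluation representations `π_ω` (which is jointly faithful, since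
`‖A‖ = sup_ω ‖π_ω A‖`): if the spectra `σ(π_ω A)` of selfadjoint elements do not depend
on `ω` (which holds by minimality), then `π_ω A = 0` for some `ω` forces `π_ω' A = 0`
for all `ω'`, and each representation `π_ω` is faithful. -/
theorem constant_spectra_implies_faithful
    {𝒜 : Type*} [NormedRing 𝒜] [StarRing 𝒜] [CStarRing 𝒜] [NormedAlgebra ℂ 𝒜]
    [CompleteSpace 𝒜] [StarModule ℂ 𝒜]
    {Ω : Type*} (B : Ω → Type*)
    [∀ ω, NormedRing (B ω)] [∀ ω, StarRing (B ω)] [∀ ω, CStarRing (B ω)]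
    [∀ ω, NormedAlgebra ℂ (B ω)] [∀ ω, CompleteSpace (B ω)] [∀ ω, StarModule ℂ (B ω)]
    (π : ∀ ω, 𝒜 →⋆ₐ[ℂ] B ω)
    (hspec : ∀ A : 𝒜, IsSelfAdjoint A → ∀ ω ω' : Ω,
      spectrum ℂ ((π ω) A) = spectrum ℂ ((π ω') A))
    (hjoint : ∀ A : 𝒜, (∀ ω, (π ω) A = 0) → A = 0) :
    (∀ A : 𝒜, ∀ ω : Ω, (π ω) A = 0 → ∀ ω' : Ω, (π ω') A = 0) ∧
    (∀ ω : Ω, Function.Injective (π ω)) :=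
  constant_spectra_implies_faithful_general B π hspec hjoint
end

section
/- Let (Ω,T) be a minimal Delone dynamical system and A a selfadjoint element of the C*-algebra of finite-range operators' closure. Then the spectrum σ(π_ω(A)) is independent of ω ∈ Ω. -/
noncomputable section

/-- A lower semicontinuous, translation-invariant function on a minimal system is constant. -/
lemma lsc_invariant_constant {X Ω : Type*} [TopologicalSpace Ω]
    (T : X → Ω → Ω) (f : Ω → ℝ)
    (hmin : ∀ ω ω' : Ω, ω' ∈ closure (Set.range fun t : X => T t ω))
    (hcov : ∀ (t : X) (ω : Ω), f (T t ω) = f ω)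
    (hlsc : LowerSemicontinuous f) (ω ω' : Ω) : f ω = f ω' := by
  have key : ∀ a b : Ω, f b ≤ f a := by
    intro a b
    by_contra h
    push_neg at h
    obtain ⟨c, hc1, hc2⟩ := exists_between h
    have hopen : IsOpen {x | c < f x} := hlsc.isOpen_preimage c
    have hb : b ∈ {x | c < f x} := hc2
    have := hmin a b
    rw [mem_closure_iff] at this
    obtain ⟨y, hy1, hy2⟩ := this _ hopen hb
    obtain ⟨t, rfl⟩ := hy2
    have h3 : c < f (T t a) := hy1
    rw [hcov t a] at h3
    exact absurd hc1 (not_lt.mpr h3.le)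
  exact le_antisymm (key ω' ω) (key ω ω')

/-- In the nontrivial case, if two unital star representations of a C*-algebra have
equal norms on every element, the real spectra of images of a selfadjoint element
satisfy a one-sided inclusion. -/
lemma spectrum_real_subset_of_norm_eq {𝒜 B₁ B₂ : Type*}
    [CStarAlgebra 𝒜] [CStarAlgebra B₁] [CStarAlgebra B₂] [Nontrivial B₁] [Nontrivial B₂]
    (π₁ : 𝒜 →⋆ₐ[ℂ] B₁) (π₂ : 𝒜 →⋆ₐ[ℂ] B₂)
    (hnorm : ∀ a : 𝒜, ‖π₁ a‖ = ‖π₂ a‖)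
    (A : 𝒜) (hA : IsSelfAdjoint A) :
    spectrum ℝ (π₂ A) ⊆ spectrum ℝ (π₁ A) := by
  have hπc1 : Continuous π₁ := AddMonoidHomClass.continuous_of_bound π₁ 1
      (fun a => by simpa using NonUnitalStarAlgHom.norm_apply_le π₁ a)
  have hπc2 : Continuous π₂ := AddMonoidHomClass.continuous_of_bound π₂ 1
      (fun a => by simpa using NonUnitalStarAlgHom.norm_apply_le π₂ a)
  have hsa1 : IsSelfAdjoint (π₁ A) := hA.map π₁
  have hsa2 : IsSelfAdjoint (π₂ A) := hA.map π₂
  intro x hx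
  by_contra hxn
  have hScl : IsClosed (spectrum ℝ (π₁ A)) := spectrum.isClosed (π₁ A)
  have hSne : (spectrum ℝ (π₁ A)).Nonempty := hsa1.spectrum_nonempty
  set f : ℝ → ℝ := fun t => Metric.infDist t (spectrum ℝ (π₁ A)) with hf
  have hfc : Continuous f := Metric.continuous_infDist_pt _
  have hfx : 0 < f x := (hScl.notMem_iff_infDist_pos hSne).mp hxn
  have hcfc0 : cfc f (π₁ A) = 0 := by
    calc cfc f (π₁ A) = cfc (0 : ℝ → ℝ) (π₁ A) :=
          cfc_congr (fun t ht => Metric.infDist_zero_of_mem ht)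
      _ = 0 := cfc_zero ℝ _
  have hmap1 : π₁ (cfc f A) = cfc f (π₁ A) := StarAlgHom.map_cfc π₁ f A (hφ := hπc1)
  have hmap2 : π₂ (cfc f A) = cfc f (π₂ A) := StarAlgHom.map_cfc π₂ f A (hφ := hπc2)
  have hnz : ‖π₂ (cfc f A)‖ = 0 := by
    rw [← hnorm (cfc f A), hmap1, hcfc0, norm_zero]
  have hcfc0' : cfc f (π₂ A) = 0 := by
    rw [← hmap2]; exact norm_eq_zero.mp hnz
  have hle : ‖f x‖ ≤ ‖cfc f (π₂ A)‖ := norm_apply_le_norm_cfc f (π₂ A) hx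
  rw [hcfc0', norm_zero, Real.norm_of_nonneg Metric.infDist_nonneg] at hle
  linarith

/-- Two unital star representations with equal norms on every element give images of a
selfadjoint element with the same complex spectrum. -/
lemma spectrum_eq_of_norm_eq {𝒜 B₁ B₂ : Type*}
    [CStarAlgebra 𝒜] [CStarAlgebra B₁] [CStarAlgebra B₂]
    (π₁ : 𝒜 →⋆ₐ[ℂ] B₁) (π₂ : 𝒜 →⋆ₐ[ℂ] B₂)
    (hnorm : ∀ a : 𝒜, ‖π₁ a‖ = ‖π₂ a‖)
    (A : 𝒜) (hA : IsSelfAdjoint A) :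
    spectrum ℂ (π₁ A) = spectrum ℂ (π₂ A) := by
  rcases subsingleton_or_nontrivial B₁ with hB₁ | hB₁
  · -- then B₂ is also trivial, and both spectra are empty
    have h1 : ‖(1 : B₂)‖ = 0 := by
      rw [← map_one π₂, ← hnorm 1, map_one, Subsingleton.elim (1 : B₁) 0, norm_zero]
    haveI : Subsingleton B₂ := subsingleton_of_zero_eq_one (norm_eq_zero.mp h1).symm
    have e1 : spectrum ℂ (π₁ A) = ∅ := by
      ext z
      simp only [Set.mem_empty_iff_false, iff_false, spectrum.mem_iff, not_not]
      exact isUnit_of_subsingleton _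
    have e2 : spectrum ℂ (π₂ A) = ∅ := by
      ext z
      simp only [Set.mem_empty_iff_false, iff_false, spectrum.mem_iff, not_not]
      exact isUnit_of_subsingleton _
    rw [e1, e2]
  · -- B₂ is also nontrivial
    haveI : Nontrivial B₂ := by
      refine nontrivial_of_ne 1 0 fun h => ?_
      have h1 : ‖(1 : B₁)‖ = 0 := by
        rw [← map_one π₁, hnorm 1, map_one, h, norm_zero]
      exact one_ne_zero (α := B₁) (norm_eq_zero.mp h1)
    have hsa1 : IsSelfAdjoint (π₁ A) := hA.map π₁
    have hsa2 : IsSelfAdjoint (π₂ A) := hA.map π₂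
    have hreal : spectrum ℝ (π₁ A) = spectrum ℝ (π₂ A) :=
      le_antisymm
        (spectrum_real_subset_of_norm_eq π₂ π₁ (fun a => (hnorm a).symm) A hA)
        (spectrum_real_subset_of_norm_eq π₁ π₂ hnorm A hA)
    calc spectrum ℂ (π₁ A) = (algebraMap ℝ ℂ) '' spectrum ℝ (π₁ A) :=
          (hsa1.spectrumRestricts.algebraMap_image).symm
      _ = (algebraMap ℝ ℂ) '' spectrum ℝ (π₂ A) := by rw [hreal]
      _ = spectrum ℂ (π₂ A) := hsa2.spectrumRestricts.algebraMap_image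

/-- For a minimal Delone dynamical system `(Ω,T)` and the C*-algebra `𝒜` of
finite-range operators' closure with its covariant family of representations `π_ω`
(whose norm functions are lower semicontinuous in `ω` by continuity of matrix
elements), the spectrum `σ(π_ω A)` of a selfadjoint element `A` is independent of
`ω ∈ Ω`. -/
theorem minimal_implies_constant_spectrum (d : ℕ)
    {Ω : Type*} [TopologicalSpace Ω]
    (T : EuclideanSpace ℝ (Fin d) → Ω → Ω)
    {𝒜 : Type*} [NormedRing 𝒜] [StarRing 𝒜] [CStarRing 𝒜] [NormedAlgebra ℂ 𝒜]
    [CompleteSpace 𝒜] [StarModule ℂ 𝒜]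
    (B : Ω → Type*)
    [∀ ω, NormedRing (B ω)] [∀ ω, StarRing (B ω)] [∀ ω, CStarRing (B ω)]
    [∀ ω, NormedAlgebra ℂ (B ω)] [∀ ω, CompleteSpace (B ω)] [∀ ω, StarModule ℂ (B ω)]
    (π : ∀ ω, 𝒜 →⋆ₐ[ℂ] B ω)
    -- minimality: every orbit is dense
    (hmin : ∀ ω ω' : Ω, ω' ∈ closure (Set.range fun t : EuclideanSpace ℝ (Fin d) => T t ω))
    -- covariance: π_{ω+t}(A) = U_t π_ω(A) U_t^*, in particular the norms agree
    (hcov : ∀ (t : EuclideanSpace ℝ (Fin d)) (ω : Ω) (A : 𝒜), ‖(π (T t ω)) A‖ = ‖(π ω) A‖)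
    -- continuity of ω ↦ ⟨π_ω(A) F_ω, F_ω⟩ yields lower semicontinuity of the norms
    (hlsc : ∀ A : 𝒜, LowerSemicontinuous fun ω => ‖(π ω) A‖) :
    ∀ A : 𝒜, IsSelfAdjoint A → ∀ ω ω' : Ω,
      spectrum ℂ ((π ω) A) = spectrum ℂ ((π ω') A) := by
  have hnorm : ∀ (A : 𝒜) (ω ω' : Ω), ‖(π ω) A‖ = ‖(π ω') A‖ := fun A ω ω' =>
    lsc_invariant_constant T (fun ω => ‖(π ω) A‖) hmin (fun t ω => hcov t ω A) (hlsc A) ω ω'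
  letI : CStarAlgebra 𝒜 := { }
  letI : ∀ ω, CStarAlgebra (B ω) := fun _ => { }
  exact fun A hA ω ω' =>
    spectrum_eq_of_norm_eq (π ω) (π ω') (fun a => hnorm a ω ω') A hA
end
end

section
/- Let Ω be a translation-invariant set of (r,R)-Delone sets, A a selfadjoint finite-range operator family with kernel of range R_a, φ a polynomial of degree N, and Q ⊂ ℝ^d bounded. Then the matrix elements of (φ(A_ω))|_Q and φ(A_ω|_Q) agree at all pairs (p,q) ∈ (ω∩Q)² whose distance to the complement of Q exceeds N·R_a; consequently |tr((φ(A_ω))|_Q) − tr(φ(A_ω|_Q))| ≤ C‖φ(A)‖ · #{q ∈ ω ∩ ∂_{N R_a}Q}, where ∂_s Q is the set of points at distance less than s from the boundary of Q. -/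
/-! The kernel of `A_ω ^ k` is the `k`-fold convolution of a kernel of range `R_a`, so it only
involves points of `ω` within `k R_a` of its arguments: at points of `ω ∩ Q` farther than `N R_a`
from `Qᶜ` the powers computed in `ℓ²(ω)` and in `ℓ²(ω ∩ Q)` coincide. Since a point of `Q` sees
`Qᶜ` no closer than the frontier, only points of `ω ∩ ∂_{N R_a} Q` contribute to the trace
difference, each by at most a fixed constant: a `2r`-separated set has at most `K` points in any
ball of radius `R_a` (a volume packing bound), so the entries of `A_ω ^ k` are bounded by
`(K M)ᵏ`, `M` a bound on the kernel. -/

noncomputable section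
open Metric Set

open Classical in
/-- Matrix of the `n`-th power of the operator on `ℓ²(ω)` with kernel `a`:
the `n`-fold convolution power (with `n = 0` giving the identity matrix). -/
def convPow {α : Type*} (ω : Set α) (a : α → α → ℂ) : ℕ → α → α → ℂ
  | 0 => fun p q => if p = q then 1 else 0
  | n + 1 => fun p q => ∑' x : ω, a p x * convPow ω a n x q

open MeasureTheory Bornology

section SeparatedSets

/-- The balls `ball x r`, `x ∈ t`, are disjoint and fit into `ball c (s + r)`. -/
theorem Finset.card_mul_measure_ball_le {E : Type*} [NormedAddCommGroup E] [MeasurableSpace E]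
    [BorelSpace E] (μ : Measure E) [μ.IsAddHaarMeasure] {r s : ℝ} {c : E} {t : Finset E}
    (hsep : (t : Set E).Pairwise fun x y => 2 * r ≤ dist x y) (hts : (t : Set E) ⊆ ball c s) :
    t.card * μ (ball 0 r) ≤ μ (ball 0 (s + r)) := by
  have hdisj : (t : Set E).PairwiseDisjoint fun x => ball x r := by
    intro x hx y hy hxy
    exact ball_disjoint_ball (by linarith [hsep hx hy hxy])
  calc (t.card : ENNReal) * μ (ball 0 r) = μ (⋃ x ∈ t, ball x r) := by
        rw [measure_biUnion_finset hdisj fun x _ => measurableSet_ball]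
        simp [Measure.addHaar_ball_center]
    _ ≤ μ (ball c (s + r)) := by
        refine measure_mono (iUnion₂_subset fun x hx => ball_subset_ball' ?_)
        linarith [mem_ball.1 (hts hx)]
    _ = μ (ball 0 (s + r)) := Measure.addHaar_ball_center μ c (s + r)

variable {E : Type*} [NormedAddCommGroup E] [NormedSpace ℝ E] [FiniteDimensional ℝ E]

theorem exists_ncard_inter_ball_le {r : ℝ} (hr : 0 < r) (s : ℝ) :
    ∃ K : ℕ, ∀ S : Set E, S.Pairwise (fun x y => 2 * r ≤ dist x y) →
      ∀ c, (S ∩ ball c s).Finite ∧ (S ∩ ball c s).ncard ≤ K := by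
  borelize E
  let μ : Measure E := Measure.addHaar
  have hv : μ (ball 0 r) ≠ 0 := (measure_ball_pos μ 0 hr).ne'
  obtain ⟨K, hK⟩ :=
    ENNReal.exists_nat_gt (ENNReal.div_lt_top (measure_ball_lt_top (μ := μ)).ne hv).ne
  refine ⟨K, fun S hsep c => ?_⟩
  have hcard (t : Finset E) (ht : (t : Set E) ⊆ S ∩ ball c s) : t.card ≤ K := by
    have hle := (ENNReal.le_div_iff_mul_le (.inl hv) (.inl measure_ball_lt_top.ne)).2 <|
      t.card_mul_measure_ball_le μ (hsep.mono (ht.trans inter_subset_left))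
        (ht.trans inter_subset_right)
    exact_mod_cast (hle.trans_lt hK).le
  have hfin : (S ∩ ball c s).Finite := by
    by_contra hinf
    obtain ⟨t, hts, htf, htc⟩ := Set.Infinite.exists_subset_ncard_eq hinf (K + 1)
    have := hcard htf.toFinset (by simpa using hts)
    rw [← ncard_eq_toFinset_card t htf] at this
    omega
  refine ⟨hfin, ?_⟩
  simpa [ncard_eq_toFinset_card _ hfin] using hcard hfin.toFinset (by simp)

theorem Set.Pairwise.finite_inter_of_isBounded {r : ℝ} (hr : 0 < r) {S B : Set E}
    (hS : S.Pairwise fun x y => 2 * r ≤ dist x y) (hB : IsBounded B) : (S ∩ B).Finite := by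
  obtain ⟨s, hBs⟩ := hB.subset_ball 0
  obtain ⟨K, hK⟩ := exists_ncard_inter_ball_le (E := E) hr s
  exact (hK S hS 0).1.subset (inter_subset_inter_right S hBs)

end SeparatedSets

theorem tsum_subtype_eq_tsum_inter {α M : Type*} [AddCommMonoid M] [TopologicalSpace M]
    {T S : Set α} {f : α → M} (hf : ∀ x ∈ T, x ∉ S → f x = 0) :
    ∑' x : T, f x = ∑' x : ↥(T ∩ S), f x := by
  rw [tsum_subtype, tsum_subtype]
  congr 1
  funext x
  by_cases hxT : x ∈ T
  · by_cases hxS : x ∈ S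
    · rw [indicator_of_mem hxT, indicator_of_mem (show x ∈ T ∩ S from ⟨hxT, hxS⟩)]
    · rw [indicator_of_mem hxT, indicator_of_notMem (fun h => hxS h.2), hf x hxT hxS]
  · rw [indicator_of_notMem hxT, indicator_of_notMem (fun h => hxT h.1)]

theorem norm_tsum_le_ncard_mul {α E : Type*} [SeminormedAddCommGroup E] {U : Set α}
    (hU : U.Finite) {f : α → E} {C : ℝ} (hf : ∀ x ∈ U, ‖f x‖ ≤ C) :
    ‖∑' x : U, f x‖ ≤ U.ncard * C := by
  have := hU.fintype
  rw [tsum_fintype, ← Nat.card_coe_set_eq, Nat.card_eq_fintype_card, ← Finset.card_univ,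
    ← nsmul_eq_mul]
  exact (norm_sum_le _ _).trans (Finset.sum_le_card_nsmul _ _ _ fun x _ => hf x x.2)

section ConvolutionPowers

variable {α : Type*} [MetricSpace α] {Ra : ℝ} {b : α → α → ℂ}

theorem convPow_succ_eq_tsum_inter_ball (hb : ∀ p q, Ra ≤ dist p q → b p q = 0)
    (σ : Set α) (n : ℕ) (p q : α) :
    convPow σ b (n + 1) p q = ∑' x : ↥(σ ∩ ball p Ra), b p x * convPow σ b n x q :=
  tsum_subtype_eq_tsum_inter (f := fun x => b p x * convPow σ b n x q) fun x _ hx => by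
    rw [hb p x (by simpa [dist_comm] using hx), zero_mul]

theorem convPow_inter_eq_of_le_infDist (hb : ∀ p q, Ra ≤ dist p q → b p q = 0)
    (ω Q : Set α) (n : ℕ) (p q : α) (hp : n * Ra ≤ infDist p Qᶜ) :
    convPow ω b n p q = convPow (ω ∩ Q) b n p q := by
  induction n generalizing p with
  | zero => rfl
  | succ n ih =>
    push_cast at hp
    have hnear (x : α) (hx : x ∈ ball p Ra) : n * Ra ≤ infDist x Qᶜ := by
      have := infDist_le_infDist_add_dist (x := p) (y := x) (s := Qᶜ)
      rw [dist_comm] at this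
      linarith [mem_ball.1 hx]
    have hball : ball p Ra ⊆ Q := fun x hx => by
      by_contra hxQ
      have hpx := infDist_le_dist_of_mem (mem_compl hxQ) (x := p)
      rw [dist_comm] at hpx
      nlinarith [n.cast_nonneg (α := ℝ), dist_nonneg (x := x) (y := p), mem_ball.1 hx]
    rw [convPow_succ_eq_tsum_inter_ball hb, convPow_succ_eq_tsum_inter_ball hb,
      inter_assoc, inter_eq_right.2 hball]
    exact tsum_congr fun x => by rw [ih x (hnear x x.2.2)]

theorem norm_convPow_le (hb : ∀ p q, Ra ≤ dist p q → b p q = 0) {M : ℝ}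
    (hbM : ∀ p q, ‖b p q‖ ≤ M) {σ : Set α} {K : ℕ}
    (hK : ∀ c, (σ ∩ ball c Ra).Finite ∧ (σ ∩ ball c Ra).ncard ≤ K) (n : ℕ) (p q : α) :
    ‖convPow σ b n p q‖ ≤ (K * M) ^ n := by
  induction n generalizing p with
  | zero =>
    simp only [convPow, pow_zero]
    split_ifs <;> simp
  | succ n ih =>
    have hM : 0 ≤ M := (norm_nonneg _).trans (hbM p p)
    rw [convPow_succ_eq_tsum_inter_ball hb]
    calc _ ≤ (σ ∩ ball p Ra).ncard * (M * (K * M) ^ n) :=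
          norm_tsum_le_ncard_mul (f := fun x => b p x * convPow σ b n x q) (hK p).1 fun x _ => by
            rw [norm_mul]; exact mul_le_mul (hbM p x) (ih x) (norm_nonneg _) hM
      _ ≤ K * (M * (K * M) ^ n) := by gcongr; exact_mod_cast (hK p).2
      _ = (K * M) ^ (n + 1) := by ring

end ConvolutionPowers

/-- The matrix of `φ(A_σ)`, for `A_σ` the operator on `ℓ²(σ)` with kernel `b`. -/
def polyConvPow {α : Type*} (φ : Polynomial ℂ) (σ : Set α) (b : α → α → ℂ) (p q : α) : ℂ :=
  ∑ k ∈ Finset.range (φ.natDegree + 1), φ.coeff k * convPow σ b k p q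

section PolynomialKernels

variable {α : Type*} [MetricSpace α] {Ra : ℝ} {b : α → α → ℂ}

theorem polyConvPow_inter_eq_of_le_infDist (hRa : 0 ≤ Ra)
    (hb : ∀ p q, Ra ≤ dist p q → b p q = 0) (φ : Polynomial ℂ) (ω Q : Set α) {p q : α}
    (hp : φ.natDegree * Ra ≤ infDist p Qᶜ) :
    polyConvPow φ ω b p q = polyConvPow φ (ω ∩ Q) b p q :=
  Finset.sum_congr rfl fun k hk => by
    rw [convPow_inter_eq_of_le_infDist hb ω Q k p q (le_trans ?_ hp)]
    gcongr
    exact_mod_cast Finset.mem_range_succ_iff.1 hk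

theorem norm_polyConvPow_le (hb : ∀ p q, Ra ≤ dist p q → b p q = 0) {M : ℝ}
    (hbM : ∀ p q, ‖b p q‖ ≤ M) {σ : Set α} {K : ℕ}
    (hK : ∀ c, (σ ∩ ball c Ra).Finite ∧ (σ ∩ ball c Ra).ncard ≤ K) (φ : Polynomial ℂ)
    (p q : α) :
    ‖polyConvPow φ σ b p q‖ ≤
      ∑ k ∈ Finset.range (φ.natDegree + 1), ‖φ.coeff k‖ * (K * M) ^ k :=
  (norm_sum_le _ _).trans <| Finset.sum_le_sum fun k _ => by
    rw [norm_mul]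
    gcongr
    exact norm_convPow_le hb hbM hK k p q

end PolynomialKernels

theorem norm_tsum_polyConvPow_sub_le {E : Type*} [NormedAddCommGroup E] [NormedSpace ℝ E]
    [FiniteDimensional ℝ E] {r Ra C : ℝ} (hr : 0 < r) (hRa : 0 ≤ Ra) {b : E → E → ℂ}
    (hb : ∀ p q, Ra ≤ dist p q → b p q = 0) {ω Q : Set E}
    (hω : ω.Pairwise fun x y => 2 * r ≤ dist x y) (hQ : IsBounded Q) (φ : Polynomial ℂ)
    (hCω : ∀ p, ‖polyConvPow φ ω b p p‖ ≤ C)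
    (hCωQ : ∀ p, ‖polyConvPow φ (ω ∩ Q) b p p‖ ≤ C) :
    ‖∑' p : ↥(ω ∩ Q), polyConvPow φ ω b p p - ∑' p : ↥(ω ∩ Q), polyConvPow φ (ω ∩ Q) b p p‖ ≤
      2 * C * Nat.card ↥(ω ∩ {x | infDist x (frontier Q) < φ.natDegree * Ra}) := by
  set W := {x | infDist x (frontier Q) < φ.natDegree * Ra}
  have hC : 0 ≤ C := (norm_nonneg _).trans (hCω 0)
  have hRHS : 0 ≤ 2 * C * Nat.card ↥(ω ∩ W) := by positivity
  rcases (frontier Q).eq_empty_or_nonempty with hfr | hfr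
  · rcases frontier_eq_empty_iff.1 hfr with rfl | rfl <;> simpa using hRHS
  have hfinQ : (ω ∩ Q).Finite := hω.finite_inter_of_isBounded hr hQ
  have hfinW : (ω ∩ W).Finite := hω.finite_inter_of_isBounded hr <|
    (hQ.closure.subset frontier_subset_closure).thickening.subset fun x hx =>
      (mem_thickening_iff_infDist_lt hfr).2 hx
  have := hfinQ.to_subtype
  have hvanish :
      ∀ p ∈ ω ∩ Q, p ∉ W → polyConvPow φ ω b p p - polyConvPow φ (ω ∩ Q) b p p = 0 := by
    intro p hp hpW
    rw [sub_eq_zero]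
    refine polyConvPow_inter_eq_of_le_infDist hRa hb φ ω Q ?_
    obtain ⟨y, hy, hdy⟩ :=
      exists_mem_frontier_infDist_compl_eq_dist hp.2 (nonempty_frontier_iff.1 hfr).2
    rw [hdy]
    exact (not_lt.1 hpW).trans (infDist_le_dist_of_mem hy)
  rw [← Summable.tsum_sub .of_finite .of_finite, tsum_subtype_eq_tsum_inter hvanish,
    Nat.card_coe_set_eq]
  calc _ ≤ (ω ∩ Q ∩ W).ncard * (2 * C) :=
        norm_tsum_le_ncard_mul (f := fun p => polyConvPow φ ω b p p - polyConvPow φ (ω ∩ Q) b p p)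
          (hfinQ.subset inter_subset_left) fun p _ =>
            (norm_sub_le _ _).trans (by linarith [hCω p, hCωQ p])
    _ ≤ (ω ∩ W).ncard * (2 * C) := by
        gcongr
        exact inter_subset_left
    _ = _ := by ring

theorem restricted_polynomial_trace_estimate_general (d : ℕ) (r R Ra : ℝ)
    (hr : 0 < r) (hRa : 0 < Ra)
    (Ω : Set (Set (EuclideanSpace ℝ (Fin d))))
    (hdel : ∀ ω ∈ Ω, IsDeloneSet r R ω)
    (a : EuclideanSpace ℝ (Fin d) → Set (EuclideanSpace ℝ (Fin d)) →
      EuclideanSpace ℝ (Fin d) → ℂ)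
    (hbd : ∃ M, ∀ p ω q, ω ∈ Ω → ‖a p ω q‖ ≤ M)
    (hrange : ∀ p ω q, Ra ≤ dist p q → a p ω q = 0)
    (φ : Polynomial ℂ) :
    -- the matrix elements agree far from the boundary
    (∀ ω ∈ Ω, ∀ Q : Set (EuclideanSpace ℝ (Fin d)), Bornology.IsBounded Q →
      ∀ p ∈ ω ∩ Q, ∀ q ∈ ω ∩ Q,
        (φ.natDegree : ℝ) * Ra < Metric.infDist p Qᶜ →
        (φ.natDegree : ℝ) * Ra < Metric.infDist q Qᶜ →
        (∑ k ∈ Finset.range (φ.natDegree + 1),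
            φ.coeff k * convPow ω (fun x y => a x ω y) k p q)
          = ∑ k ∈ Finset.range (φ.natDegree + 1),
              φ.coeff k * convPow (ω ∩ Q) (fun x y => a x ω y) k p q) ∧
    -- consequently the traces differ by at most C · #(ω ∩ ∂_{N·R_a} Q)
    (∃ C : ℝ, ∀ ω ∈ Ω, ∀ Q : Set (EuclideanSpace ℝ (Fin d)), Bornology.IsBounded Q →
      ‖(∑' p : (ω ∩ Q : Set (EuclideanSpace ℝ (Fin d))),
            ∑ k ∈ Finset.range (φ.natDegree + 1),
              φ.coeff k * convPow ω (fun x y => a x ω y) k p p)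
          - ∑' p : (ω ∩ Q : Set (EuclideanSpace ℝ (Fin d))),
              ∑ k ∈ Finset.range (φ.natDegree + 1),
                φ.coeff k * convPow (ω ∩ Q) (fun x y => a x ω y) k p p‖
        ≤ C * (Nat.card
            ↥(ω ∩ {x | Metric.infDist x (frontier Q) < (φ.natDegree : ℝ) * Ra}))) := by
  refine ⟨fun ω _ Q _ p _ q _ hp _ =>
    polyConvPow_inter_eq_of_le_infDist hRa.le (hrange · ω ·) φ ω Q hp.le, ?_⟩
  obtain ⟨M, hM⟩ := hbd
  obtain ⟨K, hK⟩ := exists_ncard_inter_ball_le (E := EuclideanSpace ℝ (Fin d)) hr Ra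
  refine ⟨2 * ∑ k ∈ Finset.range (φ.natDegree + 1), ‖φ.coeff k‖ * (K * M) ^ k,
    fun ω hω Q hQ => ?_⟩
  have hsep : ω.Pairwise fun x y => 2 * r ≤ dist x y := (hdel ω hω).1
  exact norm_tsum_polyConvPow_sub_le hr hRa.le (hrange · ω ·) hsep hQ φ
    (fun p => norm_polyConvPow_le (hrange · ω ·) (hM · ω · hω) (hK ω hsep) φ p p)
    (fun p => norm_polyConvPow_le (hrange · ω ·) (hM · ω · hω)
      (hK _ (hsep.mono inter_subset_left)) φ p p)

/-- For a selfadjoint finite-range kernel `a` of range `R_a`, a polynomial `φ` of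
degree `N` and bounded `Q`, the matrix elements of `(φ(A_ω))|_Q` and `φ(A_ω|_Q)`
agree at pairs of points of `ω ∩ Q` whose distance to the complement of `Q` exceeds
`N·R_a`; consequently the traces differ by at most a constant times the number of
points of `ω` in `∂_{N R_a} Q`. -/
theorem restricted_polynomial_trace_estimate (d : ℕ) (r R Ra : ℝ)
    (hr : 0 < r) (hR : 0 < R) (hRa : 0 < Ra)
    (Ω : Set (Set (EuclideanSpace ℝ (Fin d))))
    (hdel : ∀ ω ∈ Ω, IsDeloneSet r R ω)
    (hΩ : ∀ ω ∈ Ω, ∀ t, deloneAdd ω t ∈ Ω)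
    (a : EuclideanSpace ℝ (Fin d) → Set (EuclideanSpace ℝ (Fin d)) →
      EuclideanSpace ℝ (Fin d) → ℂ)
    (hbd : ∃ M, ∀ p ω q, ω ∈ Ω → ‖a p ω q‖ ≤ M)
    (hrange : ∀ p ω q, Ra ≤ dist p q → a p ω q = 0)
    (hinv : ∀ p ω q t, ω ∈ Ω → a (p + t) (deloneAdd ω t) (q + t) = a p ω q)
    (hsa : ∀ ω ∈ Ω, ∀ p q, a q ω p = (starRingEnd ℂ) (a p ω q))
    (φ : Polynomial ℂ) :
    -- the matrix elements agree far from the boundary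
    (∀ ω ∈ Ω, ∀ Q : Set (EuclideanSpace ℝ (Fin d)), Bornology.IsBounded Q →
      ∀ p ∈ ω ∩ Q, ∀ q ∈ ω ∩ Q,
        (φ.natDegree : ℝ) * Ra < Metric.infDist p Qᶜ →
        (φ.natDegree : ℝ) * Ra < Metric.infDist q Qᶜ →
        (∑ k ∈ Finset.range (φ.natDegree + 1),
            φ.coeff k * convPow ω (fun x y => a x ω y) k p q)
          = ∑ k ∈ Finset.range (φ.natDegree + 1),
              φ.coeff k * convPow (ω ∩ Q) (fun x y => a x ω y) k p q) ∧
    -- consequently the traces differ by at most C · #(ω ∩ ∂_{N·R_a} Q)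
    (∃ C : ℝ, ∀ ω ∈ Ω, ∀ Q : Set (EuclideanSpace ℝ (Fin d)), Bornology.IsBounded Q →
      ‖(∑' p : (ω ∩ Q : Set (EuclideanSpace ℝ (Fin d))),
            ∑ k ∈ Finset.range (φ.natDegree + 1),
              φ.coeff k * convPow ω (fun x y => a x ω y) k p p)
          - ∑' p : (ω ∩ Q : Set (EuclideanSpace ℝ (Fin d))),
              ∑ k ∈ Finset.range (φ.natDegree + 1),
                φ.coeff k * convPow (ω ∩ Q) (fun x y => a x ω y) k p p‖
        ≤ C * (Nat.card
            ↥(ω ∩ {x | Metric.infDist x (frontier Q) < (φ.natDegree : ℝ) * Ra}))) :=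
  restricted_polynomial_trace_estimate_general d r R Ra hr hRa Ω hdel a hbd hrange φ
end
end
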